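/- arXiv:1312.4181 — 8 statements merged into one kernel-verified Lean document; each statement's English description precedes it below -/
import Mathlib

section
/- Let α be a nonempty compact topological space and let R be a reflexive and transitive relation on α which has the Krener property and is openly propagating. Then there exists a point x ∈ α with x ∈ interior (A⁺(x)). (This is the abstract form of Theorem 1.1: a control system satisfying the Lie algebra rank condition on a compact manifold has a closed orbit, obtained by chaining the points of a finite subcover of {interior A⁺(x)} back to themselves.) -/
/-- The forward reachable set `A⁺(x) = {y | R x y}`. -/
def reachFwd {α : Type*} (R : α → α → Prop) (x : α) : Set α := {y | R x y}

/-- The backward reachable set `A⁻(x) = {y | R y x}`. -/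
def reachBwd {α : Type*} (R : α → α → Prop) (x : α) : Set α := {y | R y x}

/-- `R` has the Krener property: every point lies in the closure of the interior of its
forward and backward reachable sets. -/
def KrenerProperty {α : Type*} [TopologicalSpace α] (R : α → α → Prop) : Prop :=
  ∀ x : α, x ∈ closure (interior (reachFwd R x)) ∧ x ∈ closure (interior (reachBwd R x))

/-- `R` is openly propagating: forward and backward saturations of open sets are open. -/
def OpenlyPropagating {α : Type*} [TopologicalSpace α] (R : α → α → Prop) : Prop :=
  ∀ U : Set α, IsOpen U →
    IsOpen {y | ∃ x ∈ U, R x y} ∧ IsOpen {y | ∃ x ∈ U, R y x}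

/-- Abstract form of Theorem 1.1: on a nonempty compact space, a reflexive transitive
reachability relation with the Krener property which is openly propagating has a
"closed orbit": a point `x` with `x ∈ interior (A⁺(x))`. -/
theorem exists_point_mem_interior_reachFwd_self
    {α : Type*} [TopologicalSpace α] [CompactSpace α] [Nonempty α]
    (R : α → α → Prop)
    (hrefl : ∀ x, R x x)
    (htrans : ∀ x y z, R x y → R y z → R x z)
    (hKrener : KrenerProperty R)
    (hprop : OpenlyPropagating R) :
    ∃ x : α, x ∈ interior (reachFwd R x) := by
  classical
  -- invariance predicate: forward saturated sets
  let Inv : Set α → Prop := fun S => ∀ a ∈ S, ∀ b, R a b → b ∈ S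
  -- interior of a forward reachable set is forward invariant
  have hIntInv : ∀ x : α, Inv (interior (reachFwd R x)) := by
    intro x a ha b hab
    have hFopen : IsOpen {y | ∃ z ∈ interior (reachFwd R x), R z y} :=
      (hprop _ isOpen_interior).1
    have hFsub : {y | ∃ z ∈ interior (reachFwd R x), R z y} ⊆ reachFwd R x := by
      rintro y ⟨z, hz, hzy⟩
      exact htrans x z y (interior_subset hz) hzy
    have : b ∈ {y | ∃ z ∈ interior (reachFwd R x), R z y} := ⟨a, ha, hab⟩
    exact interior_maximal hFsub hFopen this
  -- closure of a forward invariant set is forward invariant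
  have hClInv : ∀ S : Set α, Inv S → Inv (closure S) := by
    intro S hS a ha b hab
    rw [mem_closure_iff]
    intro O hO hbO
    have hBopen : IsOpen {y | ∃ o ∈ O, R y o} := (hprop O hO).2
    have haB : a ∈ {y | ∃ o ∈ O, R y o} := ⟨b, hbO, hab⟩
    rcases (mem_closure_iff.1 ha) _ hBopen haB with ⟨s, ⟨o, hoO, hso⟩, hsS⟩
    exact ⟨o, hoO, hS s hsS o hso⟩
  -- minimal nonempty closed forward invariant set, by Zorn + compactness
  obtain ⟨M, -, hMmem, hMmin⟩ :
      ∃ M, M ⊆ (Set.univ : Set α) ∧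
        Minimal (· ∈ {S : Set α | S.Nonempty ∧ IsClosed S ∧ Inv S}) M := by
    refine zorn_superset_nonempty _ ?_ Set.univ
      ⟨Set.univ_nonempty, isClosed_univ, fun a _ b _ => Set.mem_univ b⟩
    intro c hc hchain hcne
    refine ⟨⋂ S ∈ c, S, ⟨?_, ?_, ?_⟩, fun s hs => Set.biInter_subset_of_mem hs⟩
    · -- nonempty by compactness
      have : Nonempty c := hcne.to_subtype
      have := IsCompact.nonempty_iInter_of_directed_nonempty_isCompact_isClosed
        (fun S : c => (S : Set α))
        (by
          intro S T
          rcases hchain.total S.2 T.2 with h | h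
          · exact ⟨S, le_refl _, h⟩
          · exact ⟨T, h, le_refl _⟩)
        (fun S => (hc S.2).1)
        (fun S => (hc S.2).2.1.isCompact)
        (fun S => (hc S.2).2.1)
      rwa [Set.biInter_eq_iInter]
    · exact isClosed_biInter fun S hS => (hc hS).2.1
    · intro a ha b hab
      exact Set.mem_biInter fun S hS => (hc hS).2.2 a (Set.biInter_subset_of_mem hS ha) b hab
  obtain ⟨hMne, hMcl, hMinv⟩ := hMmem
  -- membership facts
  have hsubM : ∀ y ∈ M, reachFwd R y ⊆ M := fun y hy z hz => hMinv y hy z hz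
  -- for y ∈ M, closure of interior of reachFwd y equals M
  have hdense : ∀ y ∈ M, closure (interior (reachFwd R y)) = M := by
    intro y hy
    have hne : (interior (reachFwd R y)).Nonempty := by
      rcases Set.eq_empty_or_nonempty (interior (reachFwd R y)) with h | h
      · exfalso; have := (hKrener y).1; rw [h, closure_empty] at this; exact this
      · exact h
    have hsub : closure (interior (reachFwd R y)) ⊆ M :=
      closure_minimal (interior_subset.trans (hsubM y hy)) hMcl
    have hmem : closure (interior (reachFwd R y)) ∈
        {S : Set α | S.Nonempty ∧ IsClosed S ∧ Inv S} :=
      ⟨hne.mono subset_closure, isClosed_closure, hClInv _ (hIntInv y)⟩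
    exact subset_antisymm hsub (hMmin hmem hsub)
  -- pick x ∈ M and v in the (nonempty) interior of its reachable set
  obtain ⟨x, hx⟩ := hMne
  have hVne : (interior (reachFwd R x)).Nonempty := by
    rcases Set.eq_empty_or_nonempty (interior (reachFwd R x)) with h | h
    · exfalso; have := (hKrener x).1; rw [h, closure_empty] at this; exact this
    · exact h
  obtain ⟨v, hv⟩ := hVne
  have hvM : v ∈ M := hsubM x hx (interior_subset hv)
  -- find w ∈ interior (reachFwd x) ∩ interior (reachBwd v), using backward Krener at v
  obtain ⟨w, hwV, hwB⟩ :=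
    mem_closure_iff.1 (hKrener v).2 _ isOpen_interior hv
  have hwM : w ∈ M := hsubM x hx (interior_subset hwV)
  -- since interior (reachFwd v) is dense in M, find r in both interiors
  have hwcl : w ∈ closure (interior (reachFwd R v)) := (hdense v hvM) ▸ hwM
  obtain ⟨r, hrB, hrF⟩ :=
    mem_closure_iff.1 hwcl _ isOpen_interior hwB
  -- r reaches v, and r ∈ interior (reachFwd v) ⊆ interior (reachFwd r)
  have hrv : r ∈ reachBwd R v := interior_subset hrB
  refine ⟨r, ?_⟩
  have hmono : reachFwd R v ⊆ reachFwd R r := fun z hz => htrans r v z hrv hz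
  exact interior_mono hmono hrF
end

section
/- Let α be a topological space and let R be a reflexive and transitive relation on α which has the Krener property and is openly propagating. Then the family {interior (A⁺(y))}_{y ∈ α} is an open cover of α; that is, for every x ∈ α there exists y ∈ α such that x ∈ interior (A⁺(y)). (Abstract form of Proposition 2.1.) -/
/-- Abstract form of Proposition 2.1: the family `{interior A⁺(y)}` covers `α`. -/
theorem interior_reachFwd_covers
    {α : Type*} [TopologicalSpace α]
    (R : α → α → Prop)
    (hrefl : ∀ x, R x x)
    (htrans : ∀ x y z, R x y → R y z → R x z)
    (hKrener : KrenerProperty R)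
    (hprop : OpenlyPropagating R) :
    ∀ x : α, ∃ y : α, x ∈ interior (reachFwd R y) := by
  intro x
  -- V = interior of the backward reachable set of x, nonempty by Krener
  set V := interior (reachBwd R x) with hV
  have hVopen : IsOpen V := isOpen_interior
  have hxV : x ∈ closure V := (hKrener x).2
  have hVne : V.Nonempty := by
    rcases (closure_nonempty_iff.mp ⟨x, hxV⟩) with h
    exact h
  obtain ⟨y, hyV⟩ := hVne
  refine ⟨y, ?_⟩
  -- W = interior of forward reachable set of y; meets V since y ∈ closure W and y ∈ V
  set W := interior (reachFwd R y) with hW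
  have hyW : y ∈ closure W := (hKrener y).1
  obtain ⟨w, hwV, hwW⟩ :=
    mem_closure_iff.mp hyW V hVopen hyV
  -- forward saturation of W
  have hS := (hprop W isOpen_interior).1
  have hxS : x ∈ {z | ∃ u ∈ W, R u z} := ⟨w, hwW, (interior_subset hwV : w ∈ reachBwd R x)⟩
  have hsub : {z | ∃ u ∈ W, R u z} ⊆ reachFwd R y := by
    rintro z ⟨u, huW, huz⟩
    exact htrans y u z (interior_subset huW) huz
  exact interior_maximal hsub hS hxS
end

section
/- Let α be a topological space and let R be a reflexive and transitive relation on α which has the Krener property and is openly propagating. Then for all x, y ∈ α one has y ∈ interior (A⁺(x)) if and only if x ∈ interior (A⁻(y)). (Abstract form of Lemma 2.2.) -/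
/-- Abstract form of Lemma 2.2: `y ∈ int A⁺(x)` iff `x ∈ int A⁻(y)`. -/
theorem mem_interior_reachFwd_iff_mem_interior_reachBwd
    {α : Type*} [TopologicalSpace α]
    (R : α → α → Prop)
    (hrefl : ∀ x, R x x)
    (htrans : ∀ x y z, R x y → R y z → R x z)
    (hKrener : KrenerProperty R)
    (hprop : OpenlyPropagating R) :
    ∀ x y : α, y ∈ interior (reachFwd R x) ↔ x ∈ interior (reachBwd R y) := by
  intro x y
  constructor
  · intro hy
    -- y is in closure of interior of A⁻(y); the open set interior(A⁺(x)) meets it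
    obtain ⟨z, hz1, hz2⟩ := (mem_closure_iff.mp (hKrener y).2) _ isOpen_interior hy
    -- z ∈ interior A⁺(x) and z ∈ interior A⁻(y)
    have hU : IsOpen (interior (reachBwd R y)) := isOpen_interior
    have hV := (hprop _ hU).2
    have hxV : x ∈ {w | ∃ u ∈ interior (reachBwd R y), R w u} :=
      ⟨z, hz2, interior_subset (s := reachFwd R x) hz1⟩
    have hsub : {w | ∃ u ∈ interior (reachBwd R y), R w u} ⊆ reachBwd R y := by
      rintro w ⟨u, hu, hwu⟩
      exact htrans _ _ _ hwu (interior_subset (s := reachBwd R y) hu)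
    exact interior_maximal hsub hV hxV
  · intro hx
    obtain ⟨z, hz1, hz2⟩ := (mem_closure_iff.mp (hKrener x).1) _ isOpen_interior hx
    have hU : IsOpen (interior (reachFwd R x)) := isOpen_interior
    have hV := (hprop _ hU).1
    have hyV : y ∈ {w | ∃ u ∈ interior (reachFwd R x), R u w} :=
      ⟨z, hz2, interior_subset (s := reachBwd R y) hz1⟩
    have hsub : {w | ∃ u ∈ interior (reachFwd R x), R u w} ⊆ reachFwd R x := by
      rintro w ⟨u, hu, huw⟩
      exact htrans _ _ _ (interior_subset (s := reachFwd R x) hu) huw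
    exact interior_maximal hsub hV hyV
end

section
/- Let α be a topological space, let R be a reflexive and transitive relation on α which is openly propagating, and let Γ ⊆ α be a mutually reachable set which is regular. Then the set A⁺(Γ) = ⋃_{a ∈ Γ} A⁺(a) is open. (Abstract form of Lemma 2.3: if Γ is a regular closed orbit then the reachable set A⁺(Γ) is open.) -/
/-- `Γ` is mutually reachable: any point of `Γ` can be reached from any other;
abstract counterpart of a closed orbit. -/
def MutuallyReachable {α : Type*} (R : α → α → Prop) (Γ : Set α) : Prop :=
  ∀ x ∈ Γ, ∀ y ∈ Γ, R x y

/-- A mutually reachable set `Γ` is regular if some point `y ∈ Γ` distinct from some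
`x ∈ Γ` lies in the interior of `A⁺(x)`; abstract counterpart of a regular closed orbit. -/
def RegularSet {α : Type*} [TopologicalSpace α] (R : α → α → Prop) (Γ : Set α) : Prop :=
  ∃ x ∈ Γ, ∃ y ∈ Γ, y ≠ x ∧ y ∈ interior (reachFwd R x)

/-- Abstract form of Lemma 2.3: if `Γ` is a regular closed orbit then `A⁺(Γ)` is open. -/
theorem isOpen_reachFwd_orbit
    {α : Type*} [TopologicalSpace α]
    (R : α → α → Prop)
    (hrefl : ∀ x, R x x)
    (htrans : ∀ x y z, R x y → R y z → R x z)
    (hprop : OpenlyPropagating R)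
    (Γ : Set α)
    (hΓ : MutuallyReachable R Γ)
    (hreg : RegularSet R Γ) :
    IsOpen (⋃ a ∈ Γ, reachFwd R a) := by
  obtain ⟨x, hx, y, hy, -, hyint⟩ := hreg
  have hopen := (hprop (interior (reachFwd R x)) isOpen_interior).1
  have heq : (⋃ a ∈ Γ, reachFwd R a)
      = {z | ∃ w ∈ interior (reachFwd R x), R w z} := by
    ext z
    simp only [Set.mem_iUnion, Set.mem_setOf_eq]
    constructor
    · rintro ⟨a, ha, haz⟩
      exact ⟨y, hyint, htrans y a z (hΓ y hy a ha) haz⟩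
    · rintro ⟨w, hw, hwz⟩
      exact ⟨x, hx, htrans x w z (interior_subset hw) hwz⟩
  rw [heq]
  exact hopen
end

section
/- Let α be a topological space, let R be a reflexive and transitive relation on α which has the Krener property and is openly propagating, and let Γ ⊆ α be a mutually reachable set which is regular. Then the set A⁻(Γ) = ⋃_{a ∈ Γ} A⁻(a) is open. (Abstract form of the Corollary to Lemma 2.4: if Γ is a regular closed orbit for the system then the backward reachable set A⁻(Γ) is open.) -/
/-- Abstract form of the Corollary to Lemma 2.4: if `Γ` is a regular closed orbit then
the backward reachable set `A⁻(Γ)` is open. -/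
theorem isOpen_reachBwd_orbit
    {α : Type*} [TopologicalSpace α]
    (R : α → α → Prop)
    (hrefl : ∀ x, R x x)
    (htrans : ∀ x y z, R x y → R y z → R x z)
    (hKrener : KrenerProperty R)
    (hprop : OpenlyPropagating R)
    (Γ : Set α)
    (hΓ : MutuallyReachable R Γ)
    (hreg : RegularSet R Γ) :
    IsOpen (⋃ a ∈ Γ, reachBwd R a) := by
  obtain ⟨x, hxΓ, y, hyΓ, -, hy⟩ := hreg
  -- find w ∈ interior (reachBwd R x) reachable from x
  have hwex : (interior (reachFwd R x) ∩ interior (reachBwd R y)).Nonempty :=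
    mem_closure_iff.mp (hKrener y).2 _ isOpen_interior hy
  obtain ⟨w, hw1, hw2⟩ := hwex
  have hsub : interior (reachBwd R y) ⊆ interior (reachBwd R x) :=
    interior_mono (fun z hz => htrans z y x hz (hΓ y hyΓ x hxΓ))
  have hwB : w ∈ interior (reachBwd R x) := hsub hw2
  have hxw : R x w := interior_subset hw1
  have hT : IsOpen {z | ∃ v ∈ interior (reachBwd R x), R z v} :=
    (hprop _ isOpen_interior).2
  have : (⋃ a ∈ Γ, reachBwd R a) = {z | ∃ v ∈ interior (reachBwd R x), R z v} := by
    ext z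
    simp only [Set.mem_iUnion, Set.mem_setOf_eq]
    constructor
    · rintro ⟨a, haΓ, hza⟩
      exact ⟨w, hwB, htrans z x w (htrans z a x hza (hΓ a haΓ x hxΓ)) hxw⟩
    · rintro ⟨v, hvB, hzv⟩
      exact ⟨x, hxΓ, htrans z v x hzv (show v ∈ reachBwd R x from interior_subset hvB)⟩
  rw [this]
  exact hT
end

section
/- Let α be a topological space, let R be a reflexive and transitive relation on α which has the Krener property and is openly propagating, and let Γ ⊆ α be a mutually reachable set. Then Γ is regular for R if and only if Γ is regular for the converse relation R' (where R' x y ↔ R y x); explicitly, there exist x, y ∈ Γ with y ≠ x and y ∈ interior (A⁺(x)) if and only if there exist x', y' ∈ Γ with x' ≠ y' and x' ∈ interior (A⁻(y')). (Abstract form of Lemma 2.4: a closed orbit is regular for the system (Σ) if and only if it is regular for the time-reversed system (Σ⁻).) -/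
/-- Abstract form of Lemma 2.4: a closed orbit is regular for the system if and only
if it is regular for the time-reversed system (i.e. for the converse relation). -/
theorem regular_iff_regular_converse
    {α : Type*} [TopologicalSpace α]
    (R : α → α → Prop)
    (hrefl : ∀ x, R x x)
    (htrans : ∀ x y z, R x y → R y z → R x z)
    (hKrener : KrenerProperty R)
    (hprop : OpenlyPropagating R)
    (Γ : Set α)
    (hΓ : MutuallyReachable R Γ) :
    (∃ x ∈ Γ, ∃ y ∈ Γ, y ≠ x ∧ y ∈ interior (reachFwd R x)) ↔
    (∃ y' ∈ Γ, ∃ x' ∈ Γ, x' ≠ y' ∧ x' ∈ interior (reachBwd R y')) := by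
  constructor
  · rintro ⟨x, hx, y, hy, hne, hyint⟩
    obtain ⟨z, hz1, hz2⟩ :=
      mem_closure_iff.mp (hKrener y).2 _ isOpen_interior hyint
    have hsat := (hprop (interior (reachBwd R y)) isOpen_interior).2
    have hsub : {w | ∃ u ∈ interior (reachBwd R y), R w u} ⊆ reachBwd R y := by
      rintro w ⟨u, hu, hwu⟩
      exact htrans w u y hwu (show u ∈ reachBwd R y from interior_subset hu)
    have hxmem : x ∈ {w | ∃ u ∈ interior (reachBwd R y), R w u} :=
      ⟨z, hz2, interior_subset hz1⟩
    exact ⟨y, hy, x, hx, hne.symm, interior_maximal hsub hsat hxmem⟩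
  · rintro ⟨y, hy, x, hx, hne, hxint⟩
    obtain ⟨z, hz1, hz2⟩ :=
      mem_closure_iff.mp (hKrener x).1 _ isOpen_interior hxint
    have hsat := (hprop (interior (reachFwd R x)) isOpen_interior).1
    have hsub : {w | ∃ u ∈ interior (reachFwd R x), R u w} ⊆ reachFwd R x := by
      rintro w ⟨u, hu, huw⟩
      exact htrans x u w (interior_subset hu) huw
    have hymem : y ∈ {w | ∃ u ∈ interior (reachFwd R x), R u w} :=
      ⟨z, hz2, show z ∈ reachBwd R y from interior_subset hz1⟩
    exact ⟨x, hx, y, hy, hne.symm, interior_maximal hsub hsat hymem⟩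
end

section
/- Let α be a topological space, let R be a reflexive and transitive relation on α which has the Krener property and is openly propagating, and let Γ ⊆ α be a mutually reachable set which is regular. Then there exists an open set U ⊆ α with Γ ⊆ U such that R x y holds for all x, y ∈ U; indeed one may take U = (⋃_{a ∈ Γ} A⁺(a)) ∩ (⋃_{a ∈ Γ} A⁻(a)). (Abstract form of the sufficiency part of Theorem 1.2: a regular closed orbit possesses a controllable neighbourhood.) -/
/-- Abstract form of the sufficiency part of Theorem 1.2: a regular closed orbit `Γ`
possesses a controllable neighbourhood; indeed `U = A⁺(Γ) ∩ A⁻(Γ)` is one. -/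
theorem regular_orbit_has_controllable_neighbourhood
    {α : Type*} [TopologicalSpace α]
    (R : α → α → Prop)
    (hrefl : ∀ x, R x x)
    (htrans : ∀ x y z, R x y → R y z → R x z)
    (hKrener : KrenerProperty R)
    (hprop : OpenlyPropagating R)
    (Γ : Set α)
    (hΓ : MutuallyReachable R Γ)
    (hreg : RegularSet R Γ) :
    ∃ U : Set α, IsOpen U ∧ Γ ⊆ U ∧ (∀ x ∈ U, ∀ y ∈ U, R x y) ∧
      U = (⋃ a ∈ Γ, reachFwd R a) ∩ (⋃ a ∈ Γ, reachBwd R a) := by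
  obtain ⟨x, hx, y, hy, hyx, hyint⟩ := hreg
  set V := interior (reachFwd R x) with hV
  set W := interior (reachBwd R y) with hW
  have hFsat := (hprop V isOpen_interior).1
  have hBsat := (hprop W isOpen_interior).2
  have hFwd : (⋃ a ∈ Γ, reachFwd R a) = {z | ∃ v ∈ V, R v z} := by
    ext z
    simp only [Set.mem_iUnion, Set.mem_setOf_eq, reachFwd]
    constructor
    · rintro ⟨a, ha, hz⟩
      exact ⟨y, hyint, htrans y a z (hΓ y hy a ha) hz⟩
    · rintro ⟨v, hv, hz⟩
      exact ⟨x, hx, htrans x v z (interior_subset (s := reachFwd R x) hv) hz⟩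
  have hwmem : ∃ w ∈ W, R y w := by
    obtain ⟨w, hw1, hw2⟩ := mem_closure_iff.mp (hKrener y).2 _ isOpen_interior hyint
    exact ⟨w, hw2, htrans y x w (hΓ y hy x hx) (interior_subset hw1)⟩
  obtain ⟨w, hwW, hyw⟩ := hwmem
  have hBwd : (⋃ a ∈ Γ, reachBwd R a) = {z | ∃ w ∈ W, R z w} := by
    ext z
    simp only [Set.mem_iUnion, Set.mem_setOf_eq, reachBwd]
    constructor
    · rintro ⟨a, ha, hz⟩
      exact ⟨w, hwW, htrans z y w (htrans z a y hz (hΓ a ha y hy)) hyw⟩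
    · rintro ⟨v, hv, hz⟩
      have hvy : R v y := interior_subset (s := reachBwd R y) hv
      exact ⟨y, hy, htrans z v y hz hvy⟩
  refine ⟨(⋃ a ∈ Γ, reachFwd R a) ∩ (⋃ a ∈ Γ, reachBwd R a), ?_, ?_, ?_, rfl⟩
  · rw [hFwd, hBwd]; exact hFsat.inter hBsat
  · intro a ha
    refine ⟨Set.mem_iUnion₂.mpr ⟨a, ha, hrefl a⟩, Set.mem_iUnion₂.mpr ⟨a, ha, hrefl a⟩⟩
  · rintro u ⟨-, hu⟩ v ⟨hv, -⟩
    obtain ⟨a, ha, hua⟩ := Set.mem_iUnion₂.mp hu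
    obtain ⟨b, hb, hbv⟩ := Set.mem_iUnion₂.mp hv
    exact htrans u b v (htrans u a b hua (hΓ a ha b hb)) hbv
end

section
/- Let α be a topological space and let R be a transitive relation on α. Suppose there are finitely many points x₁, …, x_m ∈ α (m ≥ 1) such that α = ⋃_{i=1}^m interior (A⁺(x_i)). Then there exists an index j ∈ {1, …, m} with x_j ∈ interior (A⁺(x_j)). (This is the pigeonhole argument concluding the proof of Theorem 1.1: among the base points of a finite subcover there is one that can be steered back to itself.) -/
/-- The pigeonhole argument concluding the proof of Theorem 1.1: if finitely many sets
`interior A⁺(x i)` cover `α`, then one of the base points can be steered back to itself: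
`x j ∈ interior A⁺(x j)` for some `j`. -/
theorem exists_base_point_mem_interior_reachFwd_self
    {α : Type*} [TopologicalSpace α]
    (R : α → α → Prop)
    (htrans : ∀ x y z, R x y → R y z → R x z)
    (m : ℕ) (hm : 1 ≤ m) (x : Fin m → α)
    (hcover : ∀ p : α, ∃ i : Fin m, p ∈ interior (reachFwd R (x i))) :
    ∃ j : Fin m, x j ∈ interior (reachFwd R (x j)) := by
  classical
  -- index map: x i lies in interior A⁺(x (f i))
  set f : Fin m → Fin m := fun i => (hcover (x i)).choose with hf
  have key : ∀ i, x i ∈ interior (reachFwd R (x (f i))) := fun i => (hcover (x i)).choose_spec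
  -- monotonicity: if R b a then A⁺(a) ⊆ A⁺(b)
  have mono : ∀ a b : α, R b a → reachFwd R a ⊆ reachFwd R b := by
    intro a b hba y hy
    exact htrans b a y hba hy
  -- chain: for k ≥ 1, x (f^[n] i) ∈ interior A⁺(x (f^[n+k] i))
  have i0 : Fin m := ⟨0, hm⟩
  have chain : ∀ n k : ℕ, x (f^[n] i0) ∈ interior (reachFwd R (x (f^[n + (k+1)] i0))) := by
    intro n k
    induction k with
    | zero => simpa [Function.iterate_succ_apply'] using key (f^[n] i0)
    | succ k ih =>
      have hR : R (x (f^[n + (k+2)] i0)) (x (f^[n + (k+1)] i0)) := by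
        have h2 := interior_subset (key (f^[n + (k+1)] i0))
        have he : f (f^[n + (k+1)] i0) = f^[n + (k+2)] i0 := by
          rw [← Function.iterate_succ_apply' f]
          congr 1
        rw [he] at h2
        exact h2
      exact interior_mono (mono _ _ hR) ih
  -- pigeonhole: the sequence n ↦ f^[n] i0 repeats
  obtain ⟨a, b, hne, heq⟩ := Finite.exists_ne_map_eq_of_infinite (fun n : ℕ => f^[n] i0)
  rcases hne.lt_or_gt with hab | hab
  · refine ⟨f^[a] i0, ?_⟩
    obtain ⟨k, rfl⟩ : ∃ k, b = a + (k + 1) := ⟨b - a - 1, by omega⟩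
    have := chain a k
    rwa [← heq] at this
  · refine ⟨f^[b] i0, ?_⟩
    obtain ⟨k, rfl⟩ : ∃ k, a = b + (k + 1) := ⟨a - b - 1, by omega⟩
    have := chain b k
    rwa [heq] at this
end
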